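/- arXiv:1911.12232 — 2 statements merged into one kernel-verified Lean document; each statement's English description precedes it below -/
import Mathlib

section
/- Let G be a finite group, let 𝒳 be a partition of Irr(G), and let 𝒦 be a partition of Con(G) such that (𝒳, 𝒦) is a supercharacter theory of G. If some part X ∈ 𝒳 is a bad part, then every member of 𝒦 is a singleton conjugacy class and 𝒳 is the partition of Irr(G) into singletons. In particular, a partition 𝒳 of Irr(G) that contains a bad part and also contains some part of size at least 2 admits no partition 𝒦 of Con(G) making (𝒳, 𝒦) a supercharacter theory. -/
/-!
Badness of `X` forces every part of `𝒦` to be a single class, so `|𝒳| = |𝒦| = |Con(G)|`.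
The irreducible characters are linearly independent class functions (by the orthogonality
relations), so `|Irr(G)| ≤ |Con(G)|`. A partition of `Irr(G)` into nonempty parts has at most
`|Irr(G)|` parts, with equality only when every part is a singleton.
-/

open scoped BigOperators

/-- `σ_X(g) = ∑_{χ ∈ X} χ(1)·χ(g)`. -/
noncomputable def sigmaCF {G : Type} [Group G] (X : Set (G → ℂ)) (g : G) : ℂ :=
  ∑ᶠ χ ∈ X, χ 1 * χ g

/-- `f` is the character of some irreducible (simple) complex representation of `G`. -/
def IsIrrChar (G : Type) [Group G] (f : G → ℂ) : Prop :=
  ∃ V : FDRep ℂ G, CategoryTheory.Simple V ∧ FDRep.character V = f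

/-- The set of irreducible complex characters of `G`. -/
def Irr (G : Type) [Group G] : Set (G → ℂ) := {f | IsIrrChar G f}

/-- The trivial character of `G`. -/
def trivChar (G : Type) [Group G] : G → ℂ := fun _ => 1

/-- `X ⊆ Irr(G)` and `S ⊆ Con(G)` are consistent if `σ_X` takes the same value on all
conjugacy classes belonging to `S`. -/
def Consistent {G : Type} [Group G] (X : Set (G → ℂ)) (S : Set (ConjClasses G)) : Prop :=
  ∀ x y : G, ConjClasses.mk x ∈ S → ConjClasses.mk y ∈ S → sigmaCF X x = sigmaCF X y

/-- `X` is a bad part: every nonempty subset of `Con(G)` consistent with `X` is a singleton. -/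
def IsBadPart {G : Type} [Group G] (X : Set (G → ℂ)) : Prop :=
  ∀ S : Set (ConjClasses G), S.Nonempty → Consistent X S → ∃ K, S = {K}

/-- A supercharacter theory of `G`: `𝒳` is a partition of `Irr(G)`, `𝒦` is a partition of
`Con(G)` containing `{e}` as a part, `|𝒳| = |𝒦|`, and every part of `𝒳` is consistent with
every part of `𝒦`. -/
structure IsSCT (G : Type) [Group G] (𝒳 : Set (Set (G → ℂ)))
    (𝒦 : Set (Set (ConjClasses G))) : Prop where
  nonemptyX : ∀ X ∈ 𝒳, X.Nonempty
  pairwiseX : 𝒳.Pairwise Disjoint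
  unionX : ⋃₀ 𝒳 = Irr G
  nonemptyK : ∀ S ∈ 𝒦, S.Nonempty
  pairwiseK : 𝒦.Pairwise Disjoint
  unionK : ⋃₀ 𝒦 = Set.univ
  idClassMem : {ConjClasses.mk (1 : G)} ∈ 𝒦
  cardEq : 𝒳.ncard = 𝒦.ncard
  consistentPairs : ∀ X ∈ 𝒳, ∀ S ∈ 𝒦, Consistent X S

/-- A set partition of a type `α`. -/
def IsSetPartition {α : Type} (P : Set (Set α)) : Prop :=
  (∀ A ∈ P, A.Nonempty) ∧ P.Pairwise Disjoint ∧ ⋃₀ P = Set.univ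

/-- The `n`-th Bell number: the number of set partitions of an `n`-element set. -/
noncomputable def bell (n : ℕ) : ℕ :=
  Nat.card {P : Set (Set (Fin n)) // IsSetPartition P}

open Function

section SetPartition

variable {α : Type*} {P : Set (Set α)}

noncomputable def partOf (P : Set (Set α)) (x : ⋃₀ P) : P :=
  ⟨(Set.mem_sUnion.1 x.2).choose, (Set.mem_sUnion.1 x.2).choose_spec.1⟩

lemma mem_partOf (x : ⋃₀ P) : (x : α) ∈ (partOf P x : Set α) :=
  (Set.mem_sUnion.1 x.2).choose_spec.2

lemma partOf_eq_of_mem (hP : P.Pairwise Disjoint) {x : ⋃₀ P} {A : Set α} (hA : A ∈ P)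
    (hxA : (x : α) ∈ A) : partOf P x = ⟨A, hA⟩ := by
  by_contra hne
  have hne' : (partOf P x : Set α) ≠ A := fun h => hne (Subtype.ext h)
  exact Set.disjoint_left.1 (hP (partOf P x).2 hA hne') (mem_partOf x) hxA

lemma partOf_surjective (hne : ∀ A ∈ P, A.Nonempty) (hP : P.Pairwise Disjoint) :
    Surjective (partOf P) := by
  rintro ⟨A, hA⟩
  obtain ⟨a, ha⟩ := hne A hA
  exact ⟨⟨a, A, hA, ha⟩, partOf_eq_of_mem hP hA ha⟩

lemma partOf_injective_iff (hP : P.Pairwise Disjoint) :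
    Injective (partOf P) ↔ ∀ A ∈ P, A.Subsingleton := by
  constructor
  · intro hinj A hA a ha b hb
    have hab : partOf P ⟨a, A, hA, ha⟩ = partOf P ⟨b, A, hA, hb⟩ :=
      (partOf_eq_of_mem hP hA ha).trans (partOf_eq_of_mem hP hA hb).symm
    exact congrArg Subtype.val (hinj hab)
  · intro hsub x y hxy
    exact Subtype.ext (hsub _ (partOf P y).2 (hxy ▸ mem_partOf x) (mem_partOf y))

theorem ncard_sUnion_le_ncard_iff (hne : ∀ A ∈ P, A.Nonempty) (hP : P.Pairwise Disjoint)
    (hfin : (⋃₀ P).Finite) : (⋃₀ P).ncard ≤ P.ncard ↔ ∀ A ∈ P, A.Subsingleton := by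
  have : Finite (⋃₀ P) := hfin
  have : Finite P := Finite.of_surjective _ (partOf_surjective hne hP)
  rw [← partOf_injective_iff hP, ← Nat.card_coe_set_eq, ← Nat.card_coe_set_eq]
  exact ⟨fun h => ((partOf_surjective hne hP).bijective_of_nat_card_le h).1,
    fun h => Nat.card_le_card_of_injective _ h⟩

end SetPartition

section Characters

variable {G : Type} [Group G]

lemma irr_apply_eq_of_isConj {χ : G → ℂ} (hχ : χ ∈ Irr G) {x y : G} (hxy : IsConj x y) :
    χ x = χ y := by
  obtain ⟨V, -, rfl⟩ := hχ
  obtain ⟨c, rfl⟩ := isConj_iff.1 hxy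
  exact (FDRep.char_conj V x c).symm

lemma sum_irr_mul_irr_inv [Fintype G] {χ ψ : G → ℂ} (hχ : χ ∈ Irr G) (hψ : ψ ∈ Irr G) :
    ∑ x, χ x * ψ x⁻¹ = if χ = ψ then (Nat.card G : ℂ) else 0 := by
  obtain ⟨V, hV, rfl⟩ := hχ
  obtain ⟨W, hW, rfl⟩ := hψ
  have hcard : (Nat.card G : ℂ) ≠ 0 := by exact_mod_cast Nat.card_pos.ne'
  have : Invertible (Nat.card G : ℂ) := invertibleOfNonzero hcard
  split_ifs with hVW
  · have horth := FDRep.char_orthonormal V V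
    rw [if_pos ⟨CategoryTheory.Iso.refl V⟩, inv_mul_eq_iff_eq_mul₀ hcard, mul_one] at horth
    rwa [← hVW]
  · have horth := FDRep.char_orthonormal V W
    rw [if_neg fun ⟨i⟩ => hVW (FDRep.char_iso i), inv_mul_eq_iff_eq_mul₀ hcard] at horth
    simpa using horth

variable (G)

noncomputable def charPairing [Fintype G] : LinearMap.BilinForm ℂ (G → ℂ) :=
  LinearMap.mk₂ ℂ (fun f g => ∑ x, f x * g x⁻¹)
    (fun f f' g => by simp only [Pi.add_apply, add_mul, Finset.sum_add_distrib])
    (fun c f g => by simp only [Pi.smul_apply, smul_eq_mul, mul_assoc, Finset.mul_sum])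
    (fun f g g' => by simp only [Pi.add_apply, mul_add, Finset.sum_add_distrib])
    (fun c f g => by simp only [Pi.smul_apply, smul_eq_mul, mul_left_comm, Finset.mul_sum])

lemma linearIndependent_irr [Fintype G] : LinearIndependent ℂ (fun χ : Irr G => (χ : G → ℂ)) := by
  refine LinearMap.BilinForm.linearIndependent_of_iIsOrtho (B := charPairing G) ?_ ?_
  · intro χ ψ hχψ
    show ∑ x, (χ : G → ℂ) x * (ψ : G → ℂ) x⁻¹ = 0
    rw [sum_irr_mul_irr_inv χ.2 ψ.2, if_neg (Subtype.coe_injective.ne hχψ)]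
  · intro χ
    show ∑ x, (χ : G → ℂ) x * (χ : G → ℂ) x⁻¹ ≠ 0
    rw [sum_irr_mul_irr_inv χ.2 χ.2, if_pos rfl]
    exact_mod_cast Nat.card_pos.ne'

lemma linearIndependent_irr_on_conjClasses [Finite G] :
    LinearIndependent ℂ (fun χ : Irr G => fun c : ConjClasses G => (χ : G → ℂ) c.out) := by
  have := Fintype.ofFinite G
  apply LinearIndependent.of_comp (LinearMap.funLeft ℂ ℂ ConjClasses.mk)
  convert linearIndependent_irr G with χ
  funext x
  exact irr_apply_eq_of_isConj χ.2 (ConjClasses.mk_eq_mk_iff_isConj.1 (Quotient.out_eq _))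

lemma irr_finite [Finite G] : (Irr G).Finite :=
  (linearIndependent_irr_on_conjClasses G).finite

lemma ncard_irr_le_card_conjClasses [Finite G] : (Irr G).ncard ≤ Nat.card (ConjClasses G) := by
  have := Fintype.ofFinite (ConjClasses G)
  have := (irr_finite G).fintype
  rw [← Nat.card_coe_set_eq, Nat.card_eq_fintype_card, Nat.card_eq_fintype_card,
    ← Module.finrank_fintype_fun_eq_card (η := ConjClasses G) ℂ]
  exact (linearIndependent_irr_on_conjClasses G).fintype_card_le_finrank

end Characters

theorem stmt_1_general {G : Type} [Group G] [Finite G]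
    (𝒳 : Set (Set (G → ℂ))) (𝒦 : Set (Set (ConjClasses G)))
    (h : IsSCT G 𝒳 𝒦)
    (X : Set (G → ℂ)) (hX : X ∈ 𝒳)
    (hbad : IsBadPart X) :
    (∀ S ∈ 𝒦, ∃ K : ConjClasses G, S = {K}) ∧
    (∀ Y ∈ 𝒳, ∃ f : G → ℂ, Y = {f}) := by
  have h𝒦 : ∀ S ∈ 𝒦, ∃ K : ConjClasses G, S = {K} :=
    fun S hS => hbad S (h.nonemptyK S hS) (h.consistentPairs X hX S hS)
  refine ⟨h𝒦, fun Y hY => ?_⟩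
  have hcard𝒦 : Nat.card (ConjClasses G) ≤ 𝒦.ncard := by
    rw [← Set.ncard_univ, ← h.unionK]
    refine (ncard_sUnion_le_ncard_iff h.nonemptyK h.pairwiseK (h.unionK ▸ Set.finite_univ)).2 ?_
    rintro S hS
    obtain ⟨K, rfl⟩ := h𝒦 S hS
    exact Set.subsingleton_singleton
  have hsub : ∀ Y ∈ 𝒳, Y.Subsingleton := by
    refine (ncard_sUnion_le_ncard_iff h.nonemptyX h.pairwiseX (h.unionX ▸ irr_finite G)).1 ?_
    rw [h.unionX, h.cardEq]
    exact (ncard_irr_le_card_conjClasses G).trans hcard𝒦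
  obtain ⟨f, hf⟩ := h.nonemptyX Y hY
  exact ⟨f, (Set.subsingleton_iff_singleton hf).1 (hsub Y hY)⟩

/-- a supercharacter theory whose character partition contains a bad part is
forced to be the partition into singletons on both sides. -/
theorem stmt_1 {G : Type} [Group G] [Finite G]
    (𝒳 : Set (Set (G → ℂ))) (𝒦 : Set (Set (ConjClasses G)))
    (h : IsSCT G 𝒳 𝒦)
    (X : Set (G → ℂ)) (hX : X ∈ 𝒳) (hXsub : X ⊆ Irr G \ {trivChar G})
    (hbad : IsBadPart X) :
    (∀ S ∈ 𝒦, ∃ K : ConjClasses G, S = {K}) ∧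
    (∀ Y ∈ 𝒳, ∃ f : G → ℂ, Y = {f}) :=
  stmt_1_general 𝒳 𝒦 h X hX hbad
end

section
/- Let a : ℕ → ℕ satisfy a(0) = 1 and a(n+1) = a(n) + ∑_{i=0}^{n} C(n, i)·(a(i) + 1) for every n ≥ 0, where C(n, i) denotes the binomial coefficient. Then a(n) = 2·B(n+1) − 1 for every n ≥ 0, where B(n) is the n-th Bell number. -/
open scoped BigOperators

/-!
Splitting an equivalence relation on `Option α` into the class of `none` and an equivalence
relation on the elements outside that class gives `B(n + 1) = ∑ₖ C(n, k) B(n - k)`, Mathlib's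
defining recursion for `Nat.bell`; hence `bell = Nat.bell`. Pascal's rule turns it into
`B(n + 2) = B(n + 1) + ∑ᵢ C(n, i) B(i + 1)`, which is the recursion satisfied by `a n + 1`, so
`a n + 1 = 2 B(n + 1)`.
-/

open Finset

namespace Equiv

variable {α β : Type*}

def setoidCongr (e : α ≃ β) : Setoid α ≃ Setoid β where
  toFun r := r.comap e.symm
  invFun r := r.comap e
  left_inv r := Setoid.ext fun x y => by simp [Setoid.comap_rel]
  right_inv r := Setoid.ext fun x y => by simp [Setoid.comap_rel]

end Equiv

instance Setoid.instFinite {α : Type*} [Finite α] : Finite (Setoid α) :=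
  Finite.of_injective (fun r : Setoid α => ⇑r) fun _ _ h => Setoid.ext fun x y => by
    simp only at h
    rw [h]

theorem isSetPartition_iff_isPartition {α : Type} (P : Set (Set α)) :
    IsSetPartition P ↔ Setoid.IsPartition P := by
  refine ⟨fun ⟨hne, hdisj, hunion⟩ => ?_, fun hP => ⟨fun A => Setoid.nonempty_of_mem_partition hP,
    hP.pairwiseDisjoint, hP.sUnion_eq_univ⟩⟩
  refine Set.PairwiseDisjoint.isPartition_of_exists_of_ne_empty hdisj (fun a => ?_)
    (fun h => (hne _ h).ne_empty rfl)
  exact Set.mem_sUnion.mp (hunion ▸ Set.mem_univ a)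

theorem bell_eq_card_setoid (n : ℕ) : bell n = Nat.card (Setoid (Fin n)) :=
  Nat.card_congr <| (Equiv.subtypeEquivRight isSetPartition_iff_isPartition).trans
    (Setoid.Partition.orderIso (Fin n)).toEquiv.symm

section Option

variable {α : Type*}

section Glue

variable [DecidableEq α] (s : Finset α) (t : Setoid {a // a ∉ s})

/-- Its kernel is the equivalence relation on `Option α` in which `s` is the class of `none`
and which restricts to `t` on the complement of `s`. -/
def glueMap : Option α → Option (Quotient t)
  | none => none
  | some a => if h : a ∈ s then none else some ⟦⟨a, h⟩⟧

@[simp]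
theorem glueMap_none : glueMap s t none = none :=
  rfl

variable {s t}

theorem glueMap_some_eq_none_iff {a : α} : glueMap s t (some a) = none ↔ a ∈ s := by
  by_cases h : a ∈ s <;> simp [glueMap, h]

theorem glueMap_some_of_notMem {a : α} (h : a ∉ s) : glueMap s t (some a) = some ⟦⟨a, h⟩⟧ :=
  dif_neg h

variable (s t)

theorem comap_ker_glueMap : (Setoid.ker (glueMap s t)).comap (some ∘ Subtype.val) = t := by
  ext ⟨a, ha⟩ ⟨b, hb⟩
  rw [Setoid.comap_rel, Setoid.ker_def, Function.comp_apply, Function.comp_apply,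
    glueMap_some_of_notMem ha, glueMap_some_of_notMem hb, Option.some_inj, Quotient.eq]

end Glue

variable [Fintype α]

open scoped Classical in
noncomputable def noneBlock (r : Setoid (Option α)) : Finset α :=
  {a | r (some a) none}

theorem mem_noneBlock {r : Setoid (Option α)} {a : α} : a ∈ noneBlock r ↔ r (some a) none := by
  simp [noneBlock]

variable [DecidableEq α]

theorem noneBlock_ker_glueMap (s : Finset α) (t : Setoid {a // a ∉ s}) :
    noneBlock (Setoid.ker (glueMap s t)) = s := by
  ext a
  rw [mem_noneBlock, Setoid.ker_def, glueMap_none, glueMap_some_eq_none_iff]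

theorem ker_glueMap_noneBlock (r : Setoid (Option α)) :
    Setoid.ker (glueMap (noneBlock r) (r.comap (some ∘ Subtype.val))) = r := by
  ext (_ | a) (_ | b) <;> rw [Setoid.ker_def] <;> try rw [glueMap_none]
  · exact iff_of_true rfl (r.refl _)
  · rw [eq_comm, glueMap_some_eq_none_iff, mem_noneBlock, r.comm']
  · rw [glueMap_some_eq_none_iff, mem_noneBlock]
  have hnone {c : α} (hc : r (some c) none) :
      glueMap (noneBlock r) (r.comap (some ∘ Subtype.val)) (some c) = none :=
    glueMap_some_eq_none_iff.2 (mem_noneBlock.2 hc)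
  by_cases ha : r (some a) none <;> by_cases hb : r (some b) none
  · rw [hnone ha, hnone hb]
    exact iff_of_true rfl (r.trans ha (r.symm hb))
  · rw [hnone ha, glueMap_some_of_notMem (mem_noneBlock.not.2 hb)]
    exact iff_of_false nofun fun hab => hb (r.trans (r.symm hab) ha)
  · rw [hnone hb, glueMap_some_of_notMem (mem_noneBlock.not.2 ha)]
    exact iff_of_false nofun fun hab => ha (r.trans hab hb)
  · rw [glueMap_some_of_notMem (mem_noneBlock.not.2 ha),
      glueMap_some_of_notMem (mem_noneBlock.not.2 hb), Option.some_inj, Quotient.eq]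
    rfl

def setoidOptionFiberEquiv (s : Finset α) :
    {r : Setoid (Option α) // noneBlock r = s} ≃ Setoid {a // a ∉ s} where
  toFun r := r.1.comap (some ∘ Subtype.val)
  invFun t := ⟨Setoid.ker (glueMap s t), noneBlock_ker_glueMap s t⟩
  left_inv := by
    rintro ⟨r, rfl⟩
    exact Subtype.ext (ker_glueMap_noneBlock r)
  right_inv := comap_ker_glueMap s

theorem Nat.card_setoid_option :
    Nat.card (Setoid (Option α)) = ∑ s : Finset α, Nat.card (Setoid {a // a ∉ s}) := by
  rw [← Nat.card_congr (Equiv.sigmaFiberEquiv noneBlock), Nat.card_sigma]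
  exact sum_congr rfl fun s _ => Nat.card_congr (setoidOptionFiberEquiv s)

end Option

theorem Nat.card_setoid_fin (n : ℕ) : Nat.card (Setoid (Fin n)) = Nat.bell n := by
  induction n using Nat.strong_induction_on with
  | _ n ih =>
    cases n with
    | zero =>
      rw [Nat.bell_zero, Nat.card_eq_one_iff_unique]
      exact ⟨⟨fun r r' => Setoid.ext fun x => x.elim0⟩, ⟨⊥⟩⟩
    | succ n =>
      have hblock (s : Finset (Fin n)) : Nat.card (Setoid {a // a ∉ s}) = Nat.bell (n - #s) := by
        rw [Nat.card_congr (Equiv.setoidCongr (Fintype.equivFinOfCardEq (n := n - #s) (by simp))),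
          ih _ (by omega)]
      rw [Nat.card_congr (Equiv.setoidCongr (finSuccEquiv n)), Nat.card_setoid_option,
        sum_congr rfl fun s _ => hblock s, ← powerset_univ,
        sum_powerset_apply_card (fun k => Nat.bell (n - k)), Finset.card_univ, Fintype.card_fin,
        Nat.bell_succ, Nat.range_succ_eq_Iic]
      simp

theorem bell_eq_nat_bell (n : ℕ) : bell n = Nat.bell n := by
  rw [bell_eq_card_setoid, Nat.card_setoid_fin]

theorem Nat.bell_succ_eq_sum_choose_mul_bell (n : ℕ) :
    Nat.bell (n + 1) = ∑ i ∈ range (n + 1), n.choose i * Nat.bell i := by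
  rw [Nat.bell_succ, ← Nat.range_succ_eq_Iic, ← sum_range_reflect]
  refine sum_congr rfl fun i hi => ?_
  have hin : i ≤ n := Nat.lt_succ_iff.mp (mem_range.mp hi)
  rw [Nat.add_sub_cancel, Nat.choose_symm hin, Nat.sub_sub_self hin]

theorem Nat.bell_add_two (n : ℕ) :
    Nat.bell (n + 2) = Nat.bell (n + 1) + ∑ i ∈ range (n + 1), n.choose i * Nat.bell (i + 1) := by
  have hpascal : ∑ i ∈ range (n + 1), (n + 1).choose (i + 1) * Nat.bell (i + 1) =
      ∑ i ∈ range (n + 1), n.choose i * Nat.bell (i + 1) +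
        ∑ i ∈ range (n + 1), n.choose (i + 1) * Nat.bell (i + 1) := by
    rw [← sum_add_distrib]
    exact sum_congr rfl fun i _ => by rw [Nat.choose_succ_succ, add_mul]
  have hshift : ∑ i ∈ range (n + 1), n.choose (i + 1) * Nat.bell (i + 1) + 1 =
      Nat.bell (n + 1) := by
    rw [sum_range_succ, Nat.choose_succ_self, zero_mul, add_zero,
      Nat.bell_succ_eq_sum_choose_mul_bell, sum_range_succ']
    simp
  rw [Nat.bell_succ_eq_sum_choose_mul_bell, sum_range_succ', hpascal]
  simp only [Nat.choose_zero_right, Nat.bell_zero]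
  omega

theorem eq_mul_bell_succ_of_rec {c : ℕ → ℕ} {k : ℕ} (h0 : c 0 = k)
    (hrec : ∀ n, c (n + 1) = c n + ∑ i ∈ range (n + 1), n.choose i * c i) (n : ℕ) :
    c n = k * Nat.bell (n + 1) := by
  induction n using Nat.strong_induction_on with
  | _ n ih =>
    cases n with
    | zero => simp [h0]
    | succ n =>
      rw [hrec, Nat.bell_add_two, mul_add, mul_sum, ih n n.lt_succ_self]
      congr 1
      refine sum_congr rfl fun i hi => ?_
      rw [ih i (by simpa using mem_range.mp hi), mul_left_comm]

/-- if `a 0 = 1` and `a (n+1) = a n + ∑_{i=0}^{n} C(n,i)·(a i + 1)`,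
then `a n = 2·B(n+1) - 1` for all `n`. -/
theorem stmt_9 (a : ℕ → ℕ) (h0 : a 0 = 1)
    (hrec : ∀ n : ℕ,
      a (n + 1) = a n + ∑ i ∈ Finset.range (n + 1), Nat.choose n i * (a i + 1)) :
    ∀ n : ℕ, a n = 2 * bell (n + 1) - 1 := by
  intro n
  have hshifted := eq_mul_bell_succ_of_rec (c := fun n => a n + 1) (k := 2) (by rw [h0])
    (fun n => by simp only [hrec, add_right_comm]) n
  rw [bell_eq_nat_bell]
  omega
end
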